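/- Let τ be a real constant and consider the SUPG-stabilised shallow water scheme obtained by replacing equation (i) of the energy–enstrophy conserving shallow water scheme by (i′): ⟨w, ∂u/∂t⟩ + ∫_{ℝ²} q* (w·m^⊥) dx − ⟨∇·w, ½|u|² + g(D+b)⟩ = 0 for all w ∈ V₁, where q* := q − τ(∂q/∂t + m·∇q), while keeping equations (ii)–(iv). Then the potential enstrophy satisfies d/dt ∫_{ℝ²} ½ q² D dx = −τ ∫_{ℝ²} (∂q/∂t + m·∇q)(m·∇q) dx, so that energy-conserving streamwise stabilisation dissipates enstrophy through the negative semidefinite streamline-diffusion term. -/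

import Mathlib

open MeasureTheory

/-- Partial derivative `∂f/∂xᵢ` of a scalar function on `ℝ²`. -/
noncomputable def pd2 (i : Fin 2) (f : (Fin 2 → ℝ) → ℝ) (x : Fin 2 → ℝ) : ℝ :=
  fderiv ℝ f x (Pi.single i 1)

/-- Euclidean dot product on `ℝ²`. -/
def dot2 (a b : Fin 2 → ℝ) : ℝ := a 0 * b 0 + a 1 * b 1

/-- `a^⊥ = (−a₂, a₁)`. -/
def perp2 (a : Fin 2 → ℝ) : Fin 2 → ℝ := ![-(a 1), a 0]

/-- `∇^⊥γ = (−∂γ/∂x₂, ∂γ/∂x₁)`. -/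
noncomputable def gradPerp2 (γ : (Fin 2 → ℝ) → ℝ) (x : Fin 2 → ℝ) : Fin 2 → ℝ :=
  ![-(pd2 1 γ x), pd2 0 γ x]

/-- Gradient `∇γ`. -/
noncomputable def grad2 (γ : (Fin 2 → ℝ) → ℝ) (x : Fin 2 → ℝ) : Fin 2 → ℝ :=
  ![pd2 0 γ x, pd2 1 γ x]

/-- Divergence `∇·w` of a vector field on `ℝ²`. -/
noncomputable def div2 (w : (Fin 2 → ℝ) → Fin 2 → ℝ) (x : Fin 2 → ℝ) : ℝ :=
  pd2 0 (fun y => w y 0) x + pd2 1 (fun y => w y 1) x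


section Dual
variable {V : Type*} [AddCommGroup V] [Module ℝ V] [FiniteDimensional ℝ V]

lemma span_dual_top (S : Set (Module.Dual ℝ V)) (h : ∀ v : V, (∀ ℓ ∈ S, ℓ v = 0) → v = 0) :
    Submodule.span ℝ S = ⊤ := by
  have h1 : (Submodule.span ℝ S).dualCoannihilator = ⊥ := by
    rw [Submodule.eq_bot_iff]
    intro v hv
    rw [← SetLike.mem_coe, Submodule.coe_dualCoannihilator_span] at hv
    exact h v hv
  apply Submodule.eq_top_of_finrank_eq
  have h2 := Subspace.finrank_add_finrank_dualCoannihilator_eq (Submodule.span ℝ S)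
  rw [h1, finrank_bot, add_zero] at h2
  rw [h2, Subspace.dual_finrank_eq]

lemma hasDerivAt_dual (S : Set (Module.Dual ℝ V))
    (hsep : ∀ v : V, (∀ ℓ ∈ S, ℓ v = 0) → v = 0)
    (c : ℝ → V) (c' : V) (t : ℝ)
    (h : ∀ ℓ ∈ S, HasDerivAt (fun s => ℓ (c s)) (ℓ c') t)
    (B : Module.Dual ℝ V) : HasDerivAt (fun s => B (c s)) (B c') t := by
  have hB : B ∈ Submodule.span ℝ S := by rw [span_dual_top S hsep]; trivial
  induction hB using Submodule.span_induction with
  | mem ℓ hℓ => exact h _ hℓ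
  | zero => simpa using hasDerivAt_const t (0 : ℝ)
  | add ℓ₁ ℓ₂ _ _ h1 h2 => exact h1.add h2
  | smul r ℓ _ hℓ => simpa using hℓ.const_mul r

end Dual

section Paths

/-- Scalar path lemma. -/
lemma hasDerivAt_scalar_path {X : Type*} (W : Submodule ℝ (X → ℝ)) [FiniteDimensional ℝ W]
    (p : ℝ → X → ℝ) (p' : X → ℝ) (hp : ∀ s, p s ∈ W) (hp' : p' ∈ W) (t : ℝ)
    (hd : ∀ x, HasDerivAt (fun s => p s x) (p' x) t)
    (B : Module.Dual ℝ W) : HasDerivAt (fun s => B ⟨p s, hp s⟩) (B ⟨p', hp'⟩) t := by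
  refine hasDerivAt_dual (Set.range fun x : X => (LinearMap.proj x).comp W.subtype) ?_ _ _ t ?_ B
  · rintro v hv
    ext x
    exact hv _ ⟨x, rfl⟩
  · rintro ℓ ⟨x, rfl⟩
    exact hd x

/-- Vector-field path lemma. -/
lemma hasDerivAt_vector_path {X : Type*} (W : Submodule ℝ (X → Fin 2 → ℝ)) [FiniteDimensional ℝ W]
    (p : ℝ → X → Fin 2 → ℝ) (p' : X → Fin 2 → ℝ) (hp : ∀ s, p s ∈ W) (hp' : p' ∈ W) (t : ℝ)
    (hd : ∀ x, HasDerivAt (fun s => p s x) (p' x) t)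
    (B : Module.Dual ℝ W) : HasDerivAt (fun s => B ⟨p s, hp s⟩) (B ⟨p', hp'⟩) t := by
  refine hasDerivAt_dual
    (Set.range fun xi : X × Fin 2 =>
      (LinearMap.proj xi.2).comp ((LinearMap.proj xi.1).comp W.subtype)) ?_ _ _ t ?_ B
  · rintro v hv
    ext x i
    exact hv _ ⟨(x, i), rfl⟩
  · rintro ℓ ⟨⟨x, i⟩, rfl⟩
    exact (ContinuousLinearMap.proj (R := ℝ) (φ := fun _ : Fin 2 => ℝ) i).hasFDerivAt.comp_hasDerivAt t (hd x)

end Paths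

section Trilinear
variable {A B C : Type*} [AddCommGroup A] [Module ℝ A]
  [AddCommGroup B] [Module ℝ B] [Module.Finite ℝ B] [Module.Free ℝ B]
  [AddCommGroup C] [Module ℝ C] [Module.Finite ℝ C] [Module.Free ℝ C]

lemma hasDerivAt_trilinear (T : A →ₗ[ℝ] B →ₗ[ℝ] C →ₗ[ℝ] ℝ)
    (a : ℝ → A) (a' : A) (b : ℝ → B) (b' : B) (c : ℝ → C) (c' : C) (t : ℝ)
    (ha : ∀ ℓ : Module.Dual ℝ A, HasDerivAt (fun s => ℓ (a s)) (ℓ a') t)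
    (hb : ∀ ℓ : Module.Dual ℝ B, HasDerivAt (fun s => ℓ (b s)) (ℓ b') t)
    (hc : ∀ ℓ : Module.Dual ℝ C, HasDerivAt (fun s => ℓ (c s)) (ℓ c') t) :
    HasDerivAt (fun s => T (a s) (b s) (c s))
      (T a' (b t) (c t) + T (a t) b' (c t) + T (a t) (b t) c') t := by
  classical
  let bB := Module.finBasis ℝ B
  let bC := Module.finBasis ℝ C
  have key : ∀ (x : A) (v : B) (y : C),
      T x v y = ∑ j, ∑ k, (bB.repr v j * bC.repr y k) * T x (bB j) (bC k) := by
    intro x v y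
    have e1 : T x v y = ∑ j, bB.repr v j * T x (bB j) y := by
      conv_lhs => rw [← bB.sum_repr v]
      rw [map_sum, LinearMap.sum_apply]
      exact Finset.sum_congr rfl fun j _ => by
        rw [_root_.map_smul, LinearMap.smul_apply, smul_eq_mul]
    have e2 : ∀ j, T x (bB j) y = ∑ k, bC.repr y k * T x (bB j) (bC k) := by
      intro j
      conv_lhs => rw [← bC.sum_repr y]
      rw [map_sum]
      exact Finset.sum_congr rfl fun k _ => by rw [_root_.map_smul, smul_eq_mul]
    rw [e1]
    refine Finset.sum_congr rfl fun j _ => ?_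
    rw [e2 j, Finset.mul_sum]
    exact Finset.sum_congr rfl fun k _ => by ring
  let ℓjk : Fin _ → Fin _ → Module.Dual ℝ A := fun j k =>
    { toFun := fun x => T x (bB j) (bC k)
      map_add' := fun x y => by simp
      map_smul' := fun r x => by simp }
  have hfun : (fun s => T (a s) (b s) (c s))
      = fun s => ∑ j, ∑ k, (bB.coord j (b s) * bC.coord k (c s)) * ℓjk j k (a s) := by
    funext s
    simpa [Module.Basis.coord_apply, ℓjk] using key (a s) (b s) (c s)
  have hval : T a' (b t) (c t) + T (a t) b' (c t) + T (a t) (b t) c'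
      = ∑ j, ∑ k,
          ((bB.coord j b' * bC.coord k (c t) + bB.coord j (b t) * bC.coord k c') * ℓjk j k (a t)
            + (bB.coord j (b t) * bC.coord k (c t)) * ℓjk j k a') := by
    rw [key a' (b t) (c t), key (a t) b' (c t), key (a t) (b t) c',
      ← Finset.sum_add_distrib, ← Finset.sum_add_distrib]
    refine Finset.sum_congr rfl fun j _ => ?_
    rw [← Finset.sum_add_distrib, ← Finset.sum_add_distrib]
    refine Finset.sum_congr rfl fun k _ => ?_
    simp only [Module.Basis.coord_apply, ℓjk, LinearMap.coe_mk, AddHom.coe_mk]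
    ring
  rw [hfun, hval]
  refine HasDerivAt.fun_sum fun j _ => HasDerivAt.fun_sum fun k _ => ?_
  exact ((hb (bB.coord j)).mul (hc (bC.coord k))).mul (ha (ℓjk j k))

end Trilinear

lemma topLe1 : (1 : WithTop ℕ∞) ≤ ((⊤:ℕ∞) : WithTop ℕ∞) := by
  exact_mod_cast (le_top : (1:ℕ∞) ≤ ⊤)

lemma topLe2 : (2 : WithTop ℕ∞) ≤ ((⊤:ℕ∞) : WithTop ℕ∞) := by
  have h : ((2:ℕ∞) : WithTop ℕ∞) ≤ ((⊤:ℕ∞) : WithTop ℕ∞) := WithTop.coe_le_coe.mpr le_top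
  have e : ((2:ℕ∞) : WithTop ℕ∞) = (2 : WithTop ℕ∞) := by norm_cast
  rw [e] at h; exact h

lemma topAdd1 : ((⊤:ℕ∞) : WithTop ℕ∞) + 1 ≤ ((⊤:ℕ∞) : WithTop ℕ∞) := by
  exact_mod_cast (by simp : (⊤:ℕ∞) + 1 ≤ ⊤)

lemma pd2_continuous {f : (Fin 2 → ℝ) → ℝ} (hf : ContDiff ℝ (⊤ : ℕ∞) f) (i : Fin 2) :
    Continuous (pd2 i f) := by
  have h1 : Continuous (fderiv ℝ f) := hf.continuous_fderiv (by simp)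
  exact (ContinuousLinearMap.apply ℝ ℝ (Pi.single i 1)).continuous.comp h1

lemma pd2_compactSupport {f : (Fin 2 → ℝ) → ℝ} (hs : HasCompactSupport f) (i : Fin 2) :
    HasCompactSupport (pd2 i f) := by
  have h1 : HasCompactSupport (fderiv ℝ f) := hs.fderiv ℝ
  exact h1.comp_left (g := fun L : (Fin 2 → ℝ) →L[ℝ] ℝ => L (Pi.single i 1)) rfl

lemma pd2_mul {f g : (Fin 2 → ℝ) → ℝ} (hf : ContDiff ℝ (⊤ : ℕ∞) f)
    (hg : ContDiff ℝ (⊤ : ℕ∞) g) (i : Fin 2) (x : Fin 2 → ℝ) :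
    pd2 i (fun y => f y * g y) x = pd2 i f x * g x + f x * pd2 i g x := by
  have hf' := (hf.differentiable (by simp)).differentiableAt (x := x)
  have hg' := (hg.differentiable (by simp)).differentiableAt (x := x)
  have h := hf'.hasFDerivAt.mul hg'.hasFDerivAt
  unfold pd2
  rw [show (fun y => f y * g y) = f * g from rfl, h.fderiv]
  simp [pd2]
  ring

lemma pd2_comm {f : (Fin 2 → ℝ) → ℝ} (hf : ContDiff ℝ (⊤ : ℕ∞) f) (i j : Fin 2) (x : Fin 2 → ℝ) :
    pd2 i (pd2 j f) x = pd2 j (pd2 i f) x := by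
  have hsymm : IsSymmSndFDerivAt ℝ f x := by
    exact hf.contDiffAt.isSymmSndFDerivAt (by simpa using topLe2)
  have hfd : ContDiff ℝ (⊤ : ℕ∞) (fun y => fderiv ℝ f y) := by
    exact hf.fderiv_right topAdd1
  have key : ∀ k l : Fin 2,
      pd2 k (pd2 l f) x = fderiv ℝ (fderiv ℝ f) x (Pi.single k 1) (Pi.single l 1) := by
    intro k l
    have h1 : HasFDerivAt (fderiv ℝ f) (fderiv ℝ (fderiv ℝ f) x) x :=
      ((hfd.differentiable (by simp)).differentiableAt).hasFDerivAt
    have h2 := (ContinuousLinearMap.apply ℝ ℝ (Pi.single l 1)).hasFDerivAt.comp x h1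
    have h3 : pd2 l f
        = (⇑((ContinuousLinearMap.apply ℝ ℝ) (Pi.single l 1)) ∘ fderiv ℝ f) := rfl
    rw [pd2, h3, h2.fderiv]
    rfl
  rw [key i j, key j i, hsymm.eq]

lemma ibp2 {a c : (Fin 2 → ℝ) → ℝ} (ha : ContDiff ℝ (⊤ : ℕ∞) a) (ha' : HasCompactSupport a)
    (hc : ContDiff ℝ (⊤ : ℕ∞) c) (hc' : HasCompactSupport c) (i : Fin 2) :
    ∫ x, pd2 i a x * c x = - ∫ x, pd2 i c x * a x := by
  obtain ⟨Ca, hCa⟩ := ContDiff.lipschitzWith_of_hasCompactSupport ha' ha (by simp)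
  obtain ⟨Cc, hCc⟩ := ContDiff.lipschitzWith_of_hasCompactSupport hc' hc (by simp)
  have h := LipschitzWith.integral_lineDeriv_mul_eq (μ := volume) hCa hCc hc' (Pi.single i 1)
  have e1 : ∀ x, lineDeriv ℝ a x (Pi.single i 1) = pd2 i a x := fun x =>
    ((ha.differentiable (by simp)).differentiableAt).lineDeriv_eq_fderiv
  have e2 : ∀ x, lineDeriv ℝ c x (-Pi.single i 1) = - pd2 i c x := by
    intro x
    rw [((hc.differentiable (by simp)).differentiableAt).lineDeriv_eq_fderiv, map_neg]
    rfl
  simp_rw [e1, e2, neg_mul] at h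
  rw [h, integral_neg]

lemma pd2_neg (f : (Fin 2 → ℝ) → ℝ) (i : Fin 2) (x : Fin 2 → ℝ) :
    pd2 i (fun y => -(f y)) x = -(pd2 i f x) := by
  unfold pd2
  rw [fderiv_fun_neg]
  simp

lemma div2_gradPerp2 {γ : (Fin 2 → ℝ) → ℝ} (hγ : ContDiff ℝ (⊤ : ℕ∞) γ) (x : Fin 2 → ℝ) :
    div2 (gradPerp2 γ) x = 0 := by
  have h0 : (fun y => gradPerp2 γ y 0) = fun y => -(pd2 1 γ y) := by
    funext y; simp [gradPerp2]
  have h1 : (fun y => gradPerp2 γ y 1) = fun y => pd2 0 γ y := by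
    funext y; simp [gradPerp2]
  rw [div2, h0, h1, pd2_neg, pd2_comm hγ 1 0]
  simp

lemma dot_gradPerp_perp (γ : (Fin 2 → ℝ) → ℝ) (v : Fin 2 → ℝ) (x : Fin 2 → ℝ) :
    dot2 (gradPerp2 γ x) (perp2 v) = dot2 v (grad2 γ x) := by
  simp [dot2, gradPerp2, perp2, grad2]
  ring

lemma contDiff_comp_proj {w : (Fin 2 → ℝ) → Fin 2 → ℝ} (hw : ContDiff ℝ (⊤ : ℕ∞) w) (i : Fin 2) :
    ContDiff ℝ (⊤ : ℕ∞) (fun y => w y i) :=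
  (ContinuousLinearMap.proj (R := ℝ) (φ := fun _ : Fin 2 => ℝ) i).contDiff.comp hw

section Helpers

lemma integrable_dotw {w v : (Fin 2 → ℝ) → Fin 2 → ℝ} (hw : Continuous w)
    (hv : Continuous v) (hvs : HasCompactSupport v) :
    Integrable (fun x => dot2 (w x) (v x)) := by
  have e : (fun x => dot2 (w x) (v x))
      = fun x => w x 0 * v x 0 + w x 1 * v x 1 := rfl
  rw [e]
  have h0 : Integrable (fun x => w x 0 * v x 0) :=
    (((continuous_apply (0 : Fin 2)).comp hw).mul
      ((continuous_apply (0 : Fin 2)).comp hv)).integrable_of_hasCompactSupport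
      ((hvs.comp_left (g := fun e : Fin 2 → ℝ => e 0) rfl).mul_left)
  have h1 : Integrable (fun x => w x 1 * v x 1) :=
    (((continuous_apply (1 : Fin 2)).comp hw).mul
      ((continuous_apply (1 : Fin 2)).comp hv)).integrable_of_hasCompactSupport
      ((hvs.comp_left (g := fun e : Fin 2 → ℝ => e 1) rfl).mul_left)
  exact h0.add h1

lemma integrable3 {a c d : (Fin 2 → ℝ) → ℝ} (ha : Continuous a) (hc : Continuous c)
    (hd : Continuous d) (hds : HasCompactSupport d) :
    Integrable (fun x => a x * c x * d x) :=
  ((ha.mul hc).mul hd).integrable_of_hasCompactSupport hds.mul_left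

lemma tri_add₁ {a a' c d : (Fin 2 → ℝ) → ℝ} (ha : Continuous a) (ha' : Continuous a')
    (hc : Continuous c) (hd : Continuous d) (hds : HasCompactSupport d) :
    (∫ x, (a x + a' x) * c x * d x)
      = (∫ x, a x * c x * d x) + ∫ x, a' x * c x * d x := by
  have e : (fun x => (a x + a' x) * c x * d x)
      = fun x => a x * c x * d x + a' x * c x * d x := by funext x; ring
  rw [e, integral_add (integrable3 ha hc hd hds) (integrable3 ha' hc hd hds)]

lemma tri_smul₁ {a c d : (Fin 2 → ℝ) → ℝ} (r : ℝ) :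
    (∫ x, (r * a x) * c x * d x) = r * ∫ x, a x * c x * d x := by
  have e : (fun x => (r * a x) * c x * d x)
      = fun x => r * (a x * c x * d x) := by funext x; ring
  rw [e, integral_const_mul]

lemma tri_add₂ {a c c' d : (Fin 2 → ℝ) → ℝ} (ha : Continuous a) (hc : Continuous c)
    (hc' : Continuous c') (hd : Continuous d) (hds : HasCompactSupport d) :
    (∫ x, a x * (c x + c' x) * d x)
      = (∫ x, a x * c x * d x) + ∫ x, a x * c' x * d x := by
  have e : (fun x => a x * (c x + c' x) * d x)
      = fun x => a x * c x * d x + a x * c' x * d x := by funext x; ring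
  rw [e, integral_add (integrable3 ha hc hd hds) (integrable3 ha hc' hd hds)]

lemma tri_smul₂ {a c d : (Fin 2 → ℝ) → ℝ} (r : ℝ) :
    (∫ x, a x * (r * c x) * d x) = r * ∫ x, a x * c x * d x := by
  have e : (fun x => a x * (r * c x) * d x)
      = fun x => r * (a x * c x * d x) := by funext x; ring
  rw [e, integral_const_mul]

lemma tri_add₃ {a c d d' : (Fin 2 → ℝ) → ℝ} (ha : Continuous a) (hc : Continuous c)
    (hd : Continuous d) (hds : HasCompactSupport d)
    (hd' : Continuous d') (hd's : HasCompactSupport d') :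
    (∫ x, a x * c x * (d x + d' x))
      = (∫ x, a x * c x * d x) + ∫ x, a x * c x * d' x := by
  have e : (fun x => a x * c x * (d x + d' x))
      = fun x => a x * c x * d x + a x * c x * d' x := by funext x; ring
  rw [e, integral_add (integrable3 ha hc hd hds) (integrable3 ha hc hd' hd's)]

lemma tri_smul₃ {a c d : (Fin 2 → ℝ) → ℝ} (r : ℝ) :
    (∫ x, a x * c x * (r * d x)) = r * ∫ x, a x * c x * d x := by
  have e : (fun x => a x * c x * (r * d x))
      = fun x => r * (a x * c x * d x) := by funext x; ring
  rw [e, integral_const_mul]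

/-- The dual element `v ↦ ∫ ⟨w, v⟩` of `V₁`. -/
noncomputable def dualPair1 (V₁ : Submodule ℝ ((Fin 2 → ℝ) → Fin 2 → ℝ))
    (hV₁ : ∀ w ∈ V₁, ContDiff ℝ (⊤ : ℕ∞) w ∧ HasCompactSupport w)
    (w : (Fin 2 → ℝ) → Fin 2 → ℝ) (hw : Continuous w) : Module.Dual ℝ V₁ where
  toFun v := ∫ x, dot2 (w x) (v.1 x)
  map_add' v v' := by
    obtain ⟨hvc, hvs⟩ := hV₁ v.1 v.2
    obtain ⟨hv'c, hv's⟩ := hV₁ v'.1 v'.2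
    show (∫ x, dot2 (w x) ((v + v' : V₁).1 x))
      = (∫ x, dot2 (w x) (v.1 x)) + ∫ x, dot2 (w x) (v'.1 x)
    have e : (fun x => dot2 (w x) ((v + v' : V₁).1 x))
        = fun x => dot2 (w x) (v.1 x) + dot2 (w x) (v'.1 x) := by
      funext x
      show dot2 (w x) (v.1 x + v'.1 x) = _
      simp [dot2]; ring
    rw [e, integral_add (integrable_dotw hw hvc.continuous hvs)
      (integrable_dotw hw hv'c.continuous hv's)]
  map_smul' r v := by
    show (∫ x, dot2 (w x) ((r • v : V₁).1 x)) = r * ∫ x, dot2 (w x) (v.1 x)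
    have e : (fun x => dot2 (w x) ((r • v : V₁).1 x))
        = fun x => r * dot2 (w x) (v.1 x) := by
      funext x
      show dot2 (w x) (r • v.1 x) = _
      simp [dot2]
      ring
    rw [e, integral_const_mul]

/-- The trilinear integral functional `(γ₁, γ₂, φ) ↦ ∫ γ₁ γ₂ φ`. -/
noncomputable def triInt (V₀ : Submodule ℝ ((Fin 2 → ℝ) → ℝ))
    (V₂ : Submodule ℝ ((Fin 2 → ℝ) → ℝ))
    (hV₀ : ∀ γ ∈ V₀, ContDiff ℝ (⊤ : ℕ∞) γ ∧ HasCompactSupport γ)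
    (hV₂ : ∀ φ ∈ V₂, ContDiff ℝ (⊤ : ℕ∞) φ ∧ HasCompactSupport φ) :
    V₀ →ₗ[ℝ] V₀ →ₗ[ℝ] V₂ →ₗ[ℝ] ℝ where
  toFun γ₁ := LinearMap.mk₂ ℝ (fun (γ₂ : V₀) (φ : V₂) => ∫ x, γ₁.1 x * γ₂.1 x * φ.1 x)
    (fun γ₂ γ₂' φ => by
      show (∫ x, γ₁.1 x * ((γ₂ + γ₂' : V₀).1 x) * φ.1 x) = _
      simp only [Submodule.coe_add, Pi.add_apply]
      exact tri_add₂ (hV₀ _ γ₁.2).1.continuous (hV₀ _ γ₂.2).1.continuous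
        (hV₀ _ γ₂'.2).1.continuous (hV₂ _ φ.2).1.continuous (hV₂ _ φ.2).2)
    (fun r γ₂ φ => by
      show (∫ x, γ₁.1 x * ((r • γ₂ : V₀).1 x) * φ.1 x) = _
      simp only [Submodule.coe_smul, Pi.smul_apply, smul_eq_mul]
      exact tri_smul₂ r)
    (fun γ₂ φ φ' => by
      show (∫ x, γ₁.1 x * γ₂.1 x * ((φ + φ' : V₂).1 x)) = _
      simp only [Submodule.coe_add, Pi.add_apply]
      exact tri_add₃ (hV₀ _ γ₁.2).1.continuous (hV₀ _ γ₂.2).1.continuous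
        (hV₂ _ φ.2).1.continuous (hV₂ _ φ.2).2 (hV₂ _ φ'.2).1.continuous (hV₂ _ φ'.2).2)
    (fun r γ₂ φ => by
      show (∫ x, γ₁.1 x * γ₂.1 x * ((r • φ : V₂).1 x)) = _
      simp only [Submodule.coe_smul, Pi.smul_apply, smul_eq_mul]
      exact tri_smul₃ r)
  map_add' γ₁ γ₁' := by
    refine LinearMap.ext fun γ₂ => LinearMap.ext fun φ => ?_
    simp only [LinearMap.mk₂_apply, LinearMap.add_apply]
    show (∫ x, ((γ₁ + γ₁' : V₀).1 x) * γ₂.1 x * φ.1 x) = _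
    simp only [Submodule.coe_add, Pi.add_apply]
    exact tri_add₁ (hV₀ _ γ₁.2).1.continuous (hV₀ _ γ₁'.2).1.continuous
      (hV₀ _ γ₂.2).1.continuous (hV₂ _ φ.2).1.continuous (hV₂ _ φ.2).2
  map_smul' r γ₁ := by
    refine LinearMap.ext fun γ₂ => LinearMap.ext fun φ => ?_
    simp only [LinearMap.mk₂_apply, RingHom.id_apply, LinearMap.smul_apply, smul_eq_mul]
    show (∫ x, ((r • γ₁ : V₀).1 x) * γ₂.1 x * φ.1 x) = _
    simp only [Submodule.coe_smul, Pi.smul_apply, smul_eq_mul]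
    exact tri_smul₁ r

end Helpers

/-- **Enstrophy budget for the SUPG-stabilised shallow water scheme**: with
the potential vorticity `q` replaced by `q* = q − τ(∂q/∂t + m·∇q)` in the
momentum equation, the potential enstrophy satisfies
`d/dt ∫ ½ q² D dx = −τ ∫ (∂q/∂t + m·∇q)(m·∇q) dx`. -/
theorem swe_supg_enstrophy_budget
    (τ : ℝ)
    (V₀ : Submodule ℝ ((Fin 2 → ℝ) → ℝ))
    (V₁ : Submodule ℝ ((Fin 2 → ℝ) → Fin 2 → ℝ))
    (V₂ : Submodule ℝ ((Fin 2 → ℝ) → ℝ))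
    [FiniteDimensional ℝ V₀] [FiniteDimensional ℝ V₁] [FiniteDimensional ℝ V₂]
    (hV₀ : ∀ γ ∈ V₀, ContDiff ℝ (⊤ : ℕ∞) γ ∧ HasCompactSupport γ)
    (hV₁ : ∀ w ∈ V₁, ContDiff ℝ (⊤ : ℕ∞) w ∧ HasCompactSupport w)
    (hV₂ : ∀ φ ∈ V₂, ContDiff ℝ (⊤ : ℕ∞) φ ∧ HasCompactSupport φ)
    (hcurl : ∀ γ ∈ V₀, gradPerp2 γ ∈ V₁)
    (hdiv : ∀ w ∈ V₁, div2 w ∈ V₂)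
    (g : ℝ) (b f : (Fin 2 → ℝ) → ℝ)
    (hb : ContDiff ℝ (⊤ : ℕ∞) b) (hf : ContDiff ℝ (⊤ : ℕ∞) f)
    (u u' m m' : ℝ → (Fin 2 → ℝ) → Fin 2 → ℝ)
    (D D' : ℝ → (Fin 2 → ℝ) → ℝ) (q q' : ℝ → (Fin 2 → ℝ) → ℝ)
    (hu_mem : ∀ t, u t ∈ V₁) (hu'_mem : ∀ t, u' t ∈ V₁)
    (hm_mem : ∀ t, m t ∈ V₁) (hm'_mem : ∀ t, m' t ∈ V₁)
    (hD_mem : ∀ t, D t ∈ V₂) (hD'_mem : ∀ t, D' t ∈ V₂)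
    (hq_mem : ∀ t, q t ∈ V₀) (hq'_mem : ∀ t, q' t ∈ V₀)
    (hu_deriv : ∀ t x, HasDerivAt (fun s => u s x) (u' t x) t)
    (hm_deriv : ∀ t x, HasDerivAt (fun s => m s x) (m' t x) t)
    (hD_deriv : ∀ t x, HasDerivAt (fun s => D s x) (D' t x) t)
    (hq_deriv : ∀ t x, HasDerivAt (fun s => q s x) (q' t x) t)
    (hu'_cont : ∀ x, Continuous fun t => u' t x)
    (hm'_cont : ∀ x, Continuous fun t => m' t x)
    (hD'_cont : ∀ x, Continuous fun t => D' t x)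
    (hq'_cont : ∀ x, Continuous fun t => q' t x)
    (hmom : ∀ t, ∀ w ∈ V₁,
      (∫ x, dot2 (w x) (u' t x))
        + (∫ x, (q t x - τ * (q' t x + dot2 (m t x) (grad2 (q t) x)))
              * dot2 (w x) (perp2 (m t x)))
        - (∫ x, div2 w x
            * ((1/2 : ℝ) * dot2 (u t x) (u t x) + g * (D t x + b x))) = 0)
    (hcont : ∀ t, ∀ φ ∈ V₂, ∫ x, φ x * (D' t x + div2 (m t) x) = 0)
    (hpv : ∀ t, ∀ γ ∈ V₀,
      (∫ x, γ x * (q t x * D t x)) + (∫ x, dot2 (gradPerp2 γ x) (u t x))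
        - (∫ x, γ x * f x) = 0)
    (hflux : ∀ t, ∀ v ∈ V₁, ∫ x, dot2 (v x) (m t x - D t x • u t x) = 0) :
    ∀ t : ℝ,
      HasDerivAt (fun s => ∫ x, (1/2 : ℝ) * (q s x) ^ 2 * D s x)
        (- τ * ∫ x, (q' t x + dot2 (m t x) (grad2 (q t) x))
            * dot2 (m t x) (grad2 (q t) x)) t := by
  intro t
  -- basic regularity facts
  obtain ⟨hQsm, hQsp⟩ := hV₀ (q t) (hq_mem t)
  obtain ⟨hQ'sm, hQ'sp⟩ := hV₀ (q' t) (hq'_mem t)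
  obtain ⟨hMsm, hMsp⟩ := hV₁ (m t) (hm_mem t)
  have hQc : Continuous (q t) := hQsm.continuous
  have hQ'c : Continuous (q' t) := hQ'sm.continuous
  have hm0c : Continuous (fun x => m t x 0) := (continuous_apply (0 : Fin 2)).comp hMsm.continuous
  have hm1c : Continuous (fun x => m t x 1) := (continuous_apply (1 : Fin 2)).comp hMsm.continuous
  have hm0s : HasCompactSupport (fun x => m t x 0) :=
    hMsp.comp_left (g := fun e : Fin 2 → ℝ => e 0) rfl
  have hm1s : HasCompactSupport (fun x => m t x 1) :=
    hMsp.comp_left (g := fun e : Fin 2 → ℝ => e 1) rfl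
  have hp0c : Continuous (pd2 0 (q t)) := pd2_continuous hQsm 0
  have hp1c : Continuous (pd2 1 (q t)) := pd2_continuous hQsm 1
  -- the streamline function G and source S
  have hGeq : (fun x => dot2 (m t x) (grad2 (q t) x))
      = fun x => m t x 0 * pd2 0 (q t) x + m t x 1 * pd2 1 (q t) x := by
    funext x; simp [dot2, grad2]
  have hGc : Continuous (fun x => dot2 (m t x) (grad2 (q t) x)) := by
    rw [hGeq]; exact (hm0c.mul hp0c).add (hm1c.mul hp1c)
  have hGs : HasCompactSupport (fun x => dot2 (m t x) (grad2 (q t) x)) := by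
    rw [hGeq]; exact hm0s.mul_right.add hm1s.mul_right
  have hSc : Continuous (fun x => q' t x + dot2 (m t x) (grad2 (q t) x)) := hQ'c.add hGc
  -- Step 1 : pointwise continuity equation
  have hD'eq : ∀ x, D' t x = -(div2 (m t) x) := by
    have hφmem : (fun x => D' t x + div2 (m t) x) ∈ V₂ := by
      have h1 := V₂.add_mem (hD'_mem t) (hdiv (m t) (hm_mem t))
      exact h1
    obtain ⟨hφsm, hφsp⟩ := hV₂ _ hφmem
    have hφc : Continuous (fun x => D' t x + div2 (m t) x) := hφsm.continuous
    have hzero : (∫ x, (D' t x + div2 (m t) x) * (D' t x + div2 (m t) x)) = 0 :=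
      hcont t _ hφmem
    have hint : Integrable (fun x => (D' t x + div2 (m t) x) * (D' t x + div2 (m t) x)) :=
      (hφc.mul hφc).integrable_of_hasCompactSupport hφsp.mul_left
    have hae := (integral_eq_zero_iff_of_nonneg (fun x => mul_self_nonneg _) hint).mp hzero
    have heq := ((hφc.mul hφc).ae_eq_iff_eq (μ := volume) continuous_const).mp hae
    intro x
    have hx := congrFun heq x
    have hx0 : D' t x + div2 (m t) x = 0 := by
      have h5 : (D' t x + div2 (m t) x) * (D' t x + div2 (m t) x) = 0 := hx
      exact mul_self_eq_zero.mp h5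
    linarith
  -- T and ℓu
  set T := triInt V₀ V₂ hV₀ hV₂ with hT
  have hwc : Continuous (gradPerp2 (q t)) := by
    apply continuous_pi
    intro i
    fin_cases i
    · simp only [gradPerp2]; exact hp1c.neg
    · simpa [gradPerp2] using hp0c
  set L := dualPair1 V₁ hV₁ (gradPerp2 (q t)) hwc with hL
  -- values of T
  have hTval : ∀ (γ₁ : V₀) (γ₂ : V₀) (φ : V₂),
      T γ₁ γ₂ φ = ∫ x, γ₁.1 x * γ₂.1 x * φ.1 x := fun _ _ _ => rfl
  have hLval : ∀ (v : V₁), L v = ∫ x, dot2 (gradPerp2 (q t) x) (v.1 x) := fun _ => rfl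
  -- derivative providers
  have hqD : ∀ B : Module.Dual ℝ V₀,
      HasDerivAt (fun s => B ⟨q s, hq_mem s⟩) (B ⟨q' t, hq'_mem t⟩) t := fun B =>
    hasDerivAt_scalar_path V₀ q (q' t) hq_mem (hq'_mem t) t (fun x => hq_deriv t x) B
  have hDD : ∀ B : Module.Dual ℝ V₂,
      HasDerivAt (fun s => B ⟨D s, hD_mem s⟩) (B ⟨D' t, hD'_mem t⟩) t := fun B =>
    hasDerivAt_scalar_path V₂ D (D' t) hD_mem (hD'_mem t) t (fun x => hD_deriv t x) B
  have huD : ∀ B : Module.Dual ℝ V₁,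
      HasDerivAt (fun s => B ⟨u s, hu_mem s⟩) (B ⟨u' t, hu'_mem t⟩) t := fun B =>
    hasDerivAt_vector_path V₁ u (u' t) hu_mem (hu'_mem t) t (fun x => hu_deriv t x) B
  have hConstQ : ∀ B : Module.Dual ℝ V₀,
      HasDerivAt (fun s => B ((fun _ : ℝ => (⟨q t, hq_mem t⟩ : V₀)) s)) (B 0) t := fun B => by
    rw [map_zero]; exact hasDerivAt_const t _
  -- main enstrophy derivative
  have U1 : HasDerivAt (fun s => T ⟨q s, hq_mem s⟩ ⟨q s, hq_mem s⟩ ⟨D s, hD_mem s⟩)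
      (T ⟨q' t, hq'_mem t⟩ ⟨q t, hq_mem t⟩ ⟨D t, hD_mem t⟩
        + T ⟨q t, hq_mem t⟩ ⟨q' t, hq'_mem t⟩ ⟨D t, hD_mem t⟩
        + T ⟨q t, hq_mem t⟩ ⟨q t, hq_mem t⟩ ⟨D' t, hD'_mem t⟩) t :=
    hasDerivAt_trilinear T (fun s => ⟨q s, hq_mem s⟩) ⟨q' t, hq'_mem t⟩
      (fun s => ⟨q s, hq_mem s⟩) ⟨q' t, hq'_mem t⟩
      (fun s => ⟨D s, hD_mem s⟩) ⟨D' t, hD'_mem t⟩ t hqD hqD hDD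
  -- derivative of the PV relation
  have U2 : HasDerivAt (fun s => T ⟨q t, hq_mem t⟩ ⟨q s, hq_mem s⟩ ⟨D s, hD_mem s⟩)
      (T 0 ⟨q t, hq_mem t⟩ ⟨D t, hD_mem t⟩
        + T ⟨q t, hq_mem t⟩ ⟨q' t, hq'_mem t⟩ ⟨D t, hD_mem t⟩
        + T ⟨q t, hq_mem t⟩ ⟨q t, hq_mem t⟩ ⟨D' t, hD'_mem t⟩) t :=
    hasDerivAt_trilinear T (fun _ => ⟨q t, hq_mem t⟩) 0
      (fun s => ⟨q s, hq_mem s⟩) ⟨q' t, hq'_mem t⟩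
      (fun s => ⟨D s, hD_mem s⟩) ⟨D' t, hD'_mem t⟩ t hConstQ hqD hDD
  have huL : HasDerivAt (fun s => L ⟨u s, hu_mem s⟩) (L ⟨u' t, hu'_mem t⟩) t := huD L
  have hFfun : (fun s => T ⟨q t, hq_mem t⟩ ⟨q s, hq_mem s⟩ ⟨D s, hD_mem s⟩
        + L ⟨u s, hu_mem s⟩ - ∫ x, q t x * f x) = fun _ => (0 : ℝ) := by
    funext s
    have hpvs := hpv s (q t) (hq_mem t)
    have e1 : T ⟨q t, hq_mem t⟩ ⟨q s, hq_mem s⟩ ⟨D s, hD_mem s⟩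
        = ∫ x, q t x * (q s x * D s x) := by
      rw [hTval]
      congr 1
      funext x
      show q t x * q s x * D s x = _
      ring
    rw [e1, hLval]
    show (∫ x, q t x * (q s x * D s x)) + (∫ x, dot2 (gradPerp2 (q t) x) (u s x))
      - (∫ x, q t x * f x) = 0
    linarith [hpvs]
  have hF0 : HasDerivAt (fun s => T ⟨q t, hq_mem t⟩ ⟨q s, hq_mem s⟩ ⟨D s, hD_mem s⟩
      + L ⟨u s, hu_mem s⟩ - ∫ x, q t x * f x) 0 t := by
    rw [hFfun]; exact hasDerivAt_const t 0
  have hFd : HasDerivAt (fun s => T ⟨q t, hq_mem t⟩ ⟨q s, hq_mem s⟩ ⟨D s, hD_mem s⟩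
      + L ⟨u s, hu_mem s⟩ - ∫ x, q t x * f x)
      (T 0 ⟨q t, hq_mem t⟩ ⟨D t, hD_mem t⟩
        + T ⟨q t, hq_mem t⟩ ⟨q' t, hq'_mem t⟩ ⟨D t, hD_mem t⟩
        + T ⟨q t, hq_mem t⟩ ⟨q t, hq_mem t⟩ ⟨D' t, hD'_mem t⟩
        + L ⟨u' t, hu'_mem t⟩) t := (U2.add huL).sub_const _
  have F1 := hFd.unique hF0
  simp only [map_zero, LinearMap.zero_apply, zero_add] at F1
  -- the momentum equation with w = ∇⊥q
  have F2 : L ⟨u' t, hu'_mem t⟩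
      = -((∫ x, q t x * dot2 (m t x) (grad2 (q t) x))
        - τ * ∫ x, (q' t x + dot2 (m t x) (grad2 (q t) x)) * dot2 (m t x) (grad2 (q t) x)) := by
    have h2 := hmom t (gradPerp2 (q t)) (hcurl (q t) (hq_mem t))
    have h3 : (∫ x, div2 (gradPerp2 (q t)) x
        * ((1/2 : ℝ) * dot2 (u t x) (u t x) + g * (D t x + b x))) = 0 := by
      have e : (fun x => div2 (gradPerp2 (q t)) x
          * ((1/2 : ℝ) * dot2 (u t x) (u t x) + g * (D t x + b x))) = fun _ => (0:ℝ) := by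
        funext x
        rw [div2_gradPerp2 hQsm x, zero_mul]
      rw [e, integral_zero]
    have e2 : (fun x => (q t x - τ * (q' t x + dot2 (m t x) (grad2 (q t) x)))
          * dot2 (gradPerp2 (q t) x) (perp2 (m t x)))
        = fun x => q t x * dot2 (m t x) (grad2 (q t) x)
          - τ * ((q' t x + dot2 (m t x) (grad2 (q t) x)) * dot2 (m t x) (grad2 (q t) x)) := by
      funext x
      rw [dot_gradPerp_perp]
      ring
    rw [e2, h3] at h2
    have hsplit : (∫ x, (q t x * dot2 (m t x) (grad2 (q t) x)
          - τ * ((q' t x + dot2 (m t x) (grad2 (q t) x)) * dot2 (m t x) (grad2 (q t) x))))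
        = (∫ x, q t x * dot2 (m t x) (grad2 (q t) x))
          - τ * ∫ x, (q' t x + dot2 (m t x) (grad2 (q t) x)) * dot2 (m t x) (grad2 (q t) x) := by
      rw [integral_sub, integral_const_mul]
      · exact (hQc.mul hGc).integrable_of_hasCompactSupport hGs.mul_left
      · exact (continuous_const.mul (hSc.mul hGc)).integrable_of_hasCompactSupport
          hGs.mul_left.mul_left
    rw [hsplit] at h2
    have hLu : (∫ x, dot2 (gradPerp2 (q t) x) (u' t x)) = L ⟨u' t, hu'_mem t⟩ := rfl
    rw [hLu] at h2
    linarith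
  -- F3 : T q q D' = 2 ∫ q (m·∇q)
  have F3 : T ⟨q t, hq_mem t⟩ ⟨q t, hq_mem t⟩ ⟨D' t, hD'_mem t⟩
      = 2 * ∫ x, q t x * dot2 (m t x) (grad2 (q t) x) := by
    have hqqsm : ContDiff ℝ (⊤ : ℕ∞) (fun y => q t y * q t y) := hQsm.mul hQsm
    have hqqsp : HasCompactSupport (fun y => q t y * q t y) := hQsp.mul_left
    have hm0sm : ContDiff ℝ (⊤ : ℕ∞) (fun y => m t y 0) := contDiff_comp_proj hMsm 0
    have hm1sm : ContDiff ℝ (⊤ : ℕ∞) (fun y => m t y 1) := contDiff_comp_proj hMsm 1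
    have ibp0 := ibp2 hm0sm hm0s hqqsm hqqsp 0
    have ibp1 := ibp2 hm1sm hm1s hqqsm hqqsp 1
    have e0 : T ⟨q t, hq_mem t⟩ ⟨q t, hq_mem t⟩ ⟨D' t, hD'_mem t⟩
        = ∫ x, -(q t x * q t x * div2 (m t) x) := by
      rw [hTval]
      congr 1
      funext x
      show q t x * q t x * D' t x = _
      rw [hD'eq x]
      ring
    have insum : (fun x => -(q t x * q t x * div2 (m t) x))
        = fun x => -(pd2 0 (fun y => m t y 0) x * (q t x * q t x))
          + -(pd2 1 (fun y => m t y 1) x * (q t x * q t x)) := by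
      funext x
      show -(q t x * q t x * (pd2 0 (fun y => m t y 0) x + pd2 1 (fun y => m t y 1) x)) = _
      ring
    have hpm0c : Continuous (pd2 0 (fun y => m t y 0)) := pd2_continuous hm0sm 0
    have hpm1c : Continuous (pd2 1 (fun y => m t y 1)) := pd2_continuous hm1sm 1
    have hint0 : Integrable (fun x => -(pd2 0 (fun y => m t y 0) x * (q t x * q t x))) := by
      apply Integrable.neg
      exact (hpm0c.mul (hQc.mul hQc)).integrable_of_hasCompactSupport hQsp.mul_left.mul_left
    have hint1 : Integrable (fun x => -(pd2 1 (fun y => m t y 1) x * (q t x * q t x))) := by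
      apply Integrable.neg
      exact (hpm1c.mul (hQc.mul hQc)).integrable_of_hasCompactSupport hQsp.mul_left.mul_left
    rw [e0, insum, integral_add hint0 hint1, integral_neg, integral_neg, ibp0, ibp1]
    -- now : ∫ pd2 0 (q²) * m0 + ∫ pd2 1 (q²) * m1 = 2 ∫ q (m·∇q)
    have ep0 : (fun x => pd2 0 (fun y => q t y * q t y) x * m t x 0)
        = fun x => 2 * (q t x * (pd2 0 (q t) x * m t x 0)) := by
      funext x
      rw [pd2_mul hQsm hQsm 0 x]
      ring
    have ep1 : (fun x => pd2 1 (fun y => q t y * q t y) x * m t x 1)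
        = fun x => 2 * (q t x * (pd2 1 (q t) x * m t x 1)) := by
      funext x
      rw [pd2_mul hQsm hQsm 1 x]
      ring
    have eJ : (fun x => q t x * dot2 (m t x) (grad2 (q t) x))
        = fun x => q t x * (pd2 0 (q t) x * m t x 0) + q t x * (pd2 1 (q t) x * m t x 1) := by
      funext x
      simp [dot2, grad2]
      ring
    have hintJ0 : Integrable (fun x => q t x * (pd2 0 (q t) x * m t x 0)) :=
      (hQc.mul (hp0c.mul hm0c)).integrable_of_hasCompactSupport hm0s.mul_left.mul_left
    have hintJ1 : Integrable (fun x => q t x * (pd2 1 (q t) x * m t x 1)) :=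
      (hQc.mul (hp1c.mul hm1c)).integrable_of_hasCompactSupport hm1s.mul_left.mul_left
    rw [neg_neg, neg_neg, ep0, ep1, integral_const_mul, integral_const_mul, eJ,
      integral_add hintJ0 hintJ1]
    ring
  -- symmetric values
  have hsym : T ⟨q' t, hq'_mem t⟩ ⟨q t, hq_mem t⟩ ⟨D t, hD_mem t⟩
      = T ⟨q t, hq_mem t⟩ ⟨q' t, hq'_mem t⟩ ⟨D t, hD_mem t⟩ := by
    rw [hTval, hTval]
    congr 1
    funext x
    show q' t x * q t x * D t x = q t x * q' t x * D t x
    ring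
  -- final value identity
  have hval : (1/2 : ℝ) * (T ⟨q' t, hq'_mem t⟩ ⟨q t, hq_mem t⟩ ⟨D t, hD_mem t⟩
        + T ⟨q t, hq_mem t⟩ ⟨q' t, hq'_mem t⟩ ⟨D t, hD_mem t⟩
        + T ⟨q t, hq_mem t⟩ ⟨q t, hq_mem t⟩ ⟨D' t, hD'_mem t⟩)
      = -τ * ∫ x, (q' t x + dot2 (m t x) (grad2 (q t) x)) * dot2 (m t x) (grad2 (q t) x) := by
    rw [hsym]
    linarith [F1, F2, F3]
  have hfun : (fun s => ∫ x, (1/2 : ℝ) * (q s x) ^ 2 * D s x)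
      = fun s => (1/2 : ℝ) * T ⟨q s, hq_mem s⟩ ⟨q s, hq_mem s⟩ ⟨D s, hD_mem s⟩ := by
    funext s
    rw [hTval, ← integral_const_mul]
    congr 1
    funext x
    show (1/2 : ℝ) * (q s x) ^ 2 * D s x = (1/2 : ℝ) * (q s x * q s x * D s x)
    ring
  rw [hfun, ← hval]
  exact U1.const_mul (1/2 : ℝ)
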